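/- arXiv:1808.09738 — 2 statements merged into one kernel-verified Lean document; each statement's English description precedes it below -/
import Mathlib

section
/- Let 𝒳 be a non-trivial well-pointed coherent category in which the unique morphism X → 1 is a retraction for every X ≇ 0, and let X be an object of 𝒳 such that Sub(X) is a complete lattice. Then the surjective lattice homomorphism Vs : Sub(X) → K(Spec X) onto the lattice of closed subsets of Spec X is a lattice isomorphism if and only if Sub(X) is atomic (every element of Sub(X) is the supremum of the atoms below it). -/
open CategoryTheory CategoryTheory.Limits Opposite

universe w' w v u

namespace Paper

variable {C : Type u} [Category.{v} C]

/-- "X ≇ 0": the object `X` is not initial. -/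
def NonInitial (X : C) : Prop := IsInitial X → False

/-- The category is non-trivial: `0 ≇ 1`, i.e. no object is both initial and terminal. -/
def NonTrivialCat (C : Type u) [Category.{v} C] : Prop :=
  ∀ X : C, IsInitial X → IsTerminal X → False

section Terminal
variable (C) [HasTerminal C]

/-- The category is well-pointed: the functor of points `pt = Hom(1, -)` is faithful. -/
def WellPointed : Prop :=
  ∀ ⦃X Y : C⦄ (f g : X ⟶ Y), (∀ p : ⊤_ C ⟶ X, p ≫ f = p ≫ g) → f = g

/-- The unique morphism `X ⟶ 1` is a retraction for every `X ≇ 0`. -/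
def EnoughPoints : Prop :=
  ∀ X : C, NonInitial X → Nonempty (SplitEpi (terminal.from X))

end Terminal

/-- `b` is the bottom element of `Sub(X)`. -/
def IsBotIn {X : C} (b : Subobject X) : Prop := ∀ S : Subobject X, b ≤ S

/-- `S` is an atom of the subobject lattice `Sub(X)`. -/
def IsAtomIn {X : C} (S : Subobject X) : Prop :=
  ¬ IsBotIn S ∧ ∀ T : Subobject X, T < S → IsBotIn T

/-- `Sub(X)` is atomic: every subobject is the supremum of the atoms below it. -/
def AtomicSubobjects (X : C) : Prop :=
  ∀ S : Subobject X, IsLUB {A : Subobject X | IsAtomIn A ∧ A ≤ S} S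

/-- `S` is a complemented subobject: it has a complement `T` with `S ⊓ T = ⊥`, `S ⊔ T = ⊤`. -/
def IsComplementedSub {X : C} (S : Subobject X) : Prop :=
  ∃ T m : Subobject X, IsGLB {S, T} m ∧ IsBotIn m ∧ IsLUB {S, T} ⊤

/-- A (non-empty) filter of the Boolean center `B(X)` of `Sub(X)`. -/
structure CenterFilter (X : C) where
  carrier : Set (Subobject X)
  mem_complemented : ∀ S ∈ carrier, IsComplementedSub S
  nonempty : carrier.Nonempty
  inf_mem : ∀ S ∈ carrier, ∀ T ∈ carrier, ∀ m : Subobject X, IsGLB {S, T} m → m ∈ carrier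
  mem_of_le : ∀ S ∈ carrier, ∀ T : Subobject X, IsComplementedSub T → S ≤ T → T ∈ carrier

theorem CenterFilter.ext' {X : C} {F G : CenterFilter X} (h : F.carrier = G.carrier) : F = G := by
  cases F; cases G; cases h; rfl

/-- Filters of the Boolean center, ordered by reverse inclusion. -/
instance (X : C) : PartialOrder (CenterFilter X) where
  le F G := G.carrier ⊆ F.carrier
  le_refl _ := subset_rfl
  le_trans _ _ _ h1 h2 := fun _ hx => h1 (h2 hx)
  le_antisymm _ _ h1 h2 := CenterFilter.ext' (Set.Subset.antisymm h2 h1)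

/-- An object `X` is filtral if `Sub(X)` is isomorphic, as a lattice, to the lattice of
non-empty filters of the Boolean center of `Sub(X)`. -/
def FiltralObject (X : C) : Prop :=
  Nonempty (Subobject X ≃o CenterFilter X)

/-- A category is filtral if every object is covered by a filtral one. -/
def Filtral (C : Type u) [Category.{v} C] : Prop :=
  ∀ Y : C, ∃ (X : C) (f : X ⟶ Y), Nonempty (RegularEpi f) ∧ FiltralObject X

/-- `Sub(X)` is a complete lattice (every subset has an infimum). -/
def MonoCompleteAt (X : C) : Prop :=
  ∀ s : Set (Subobject X), ∃ m : Subobject X, IsGLB s m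

/-- The category is mono-complete: every subobject poset is a complete lattice. -/
def MonoComplete (C : Type u) [Category.{v} C] : Prop := ∀ X : C, MonoCompleteAt X

section Points
variable [HasTerminal C]

/-- `Vs S` is the set of points of `X` factoring through the subobject `S`. -/
def Vs {X : C} (S : Subobject X) : Set (⊤_ C ⟶ X) := {p | S.Factors p}

open Classical in
/-- `Cg T` is the smallest subobject of `X` through which every point in `T` factors
(defined whenever the relevant infimum exists). -/
noncomputable def Cg {X : C} (T : Set (⊤_ C ⟶ X)) : Subobject X :=
  if h : ∃ m : Subobject X, IsGLB {S : Subobject X | ∀ p ∈ T, S.Factors p} m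
  then h.choose else ⊤

/-- The closure operator `cl = Vs ∘ Cg` on the power set of `pt X`. -/
noncomputable def cl {X : C} (T : Set (⊤_ C ⟶ X)) : Set (⊤_ C ⟶ X) := Vs (Cg T)

end Points

/-- Images are stable under pullback (together with finite limits and images, this is
the definition of a regular category). -/
class StableImages (C : Type u) [Category.{v} C] [HasFiniteLimits C] [HasImages C] : Prop where
  image_pullback : ∀ {X Y Z : C} (f : X ⟶ Y) (g : Z ⟶ Y),
    (Subobject.pullback g).obj (imageSubobject f) = imageSubobject (pullback.snd f g)

/-- The extra structure of a coherent category: each `Sub(X)` has finite joins and these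
are preserved by the pullback functors. -/
class CoherentJoins (C : Type u) [Category.{v} C] [HasPullbacks C] : Prop where
  exists_bot : ∀ X : C, ∃ b : Subobject X, IsBotIn b
  exists_sup : ∀ {X : C} (S T : Subobject X), ∃ U : Subobject X, IsLUB {S, T} U
  pullback_bot : ∀ {X Y : C} (f : X ⟶ Y) (b : Subobject Y),
    IsBotIn b → IsBotIn ((Subobject.pullback f).obj b)
  pullback_sup : ∀ {X Y : C} (f : X ⟶ Y) (S T U : Subobject Y), IsLUB {S, T} U →
    IsLUB {(Subobject.pullback f).obj S, (Subobject.pullback f).obj T}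
      ((Subobject.pullback f).obj U)

/-- An internal equivalence relation: a jointly-monic pair which is reflexive, symmetric and
transitive (expressed via generalised elements). -/
structure IsEquivRelPair {R X : C} (r₁ r₂ : R ⟶ X) : Prop where
  jointlyMono : ∀ {Z : C} (a b : Z ⟶ R), a ≫ r₁ = b ≫ r₁ → a ≫ r₂ = b ≫ r₂ → a = b
  refl : ∀ {Z : C} (a : Z ⟶ X), ∃ h : Z ⟶ R, h ≫ r₁ = a ∧ h ≫ r₂ = a
  symm : ∀ {Z : C} (a b : Z ⟶ X), (∃ h : Z ⟶ R, h ≫ r₁ = a ∧ h ≫ r₂ = b) →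
    ∃ h : Z ⟶ R, h ≫ r₁ = b ∧ h ≫ r₂ = a
  trans : ∀ {Z : C} (a b c : Z ⟶ X), (∃ h : Z ⟶ R, h ≫ r₁ = a ∧ h ≫ r₂ = b) →
    (∃ h : Z ⟶ R, h ≫ r₁ = b ∧ h ≫ r₂ = c) →
    ∃ h : Z ⟶ R, h ≫ r₁ = a ∧ h ≫ r₂ = c

/-- Every internal equivalence relation is effective: it is the kernel pair of its
coequaliser. -/
def EffectiveEquivRels (C : Type u) [Category.{v} C] : Prop :=
  ∀ {R X : C} (r₁ r₂ : R ⟶ X), IsEquivRelPair r₁ r₂ →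
    ∃ (Y : C) (q : X ⟶ Y) (w : r₁ ≫ q = r₂ ≫ q),
      Nonempty (IsColimit (Cofork.ofπ q w)) ∧ Nonempty (IsLimit (PullbackCone.mk r₁ r₂ w))

/-- An object is decidable if its diagonal is a complemented subobject of `X ⨯ X`. -/
def DecidableObj [HasBinaryProducts C] (X : C) : Prop :=
  ∃ (Y : C) (g : Y ⟶ X ⨯ X), Nonempty (IsColimit (BinaryCofan.mk (diag X) g))

/-- An object is pro-decidable if it is a codirected (cofiltered) limit of decidable objects. -/
def ProDecidableObj [HasBinaryProducts C] (X : C) : Prop :=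
  ∃ (J : Type v) (_ : SmallCategory J) (_ : IsCofiltered J) (D : J ⥤ C) (c : Cone D),
    (∀ j, DecidableObj (D.obj j)) ∧ Nonempty (IsLimit c) ∧ Nonempty (c.pt ≅ X)

/-
The subobjects generated by points are exactly the atoms of `Sub(X)`. An atom is not initial, so
it contains a point, and it is then generated by it. Conversely a point `p` generates a
non-bottom subobject: `1` has a proper subobject (otherwise any two points agree on their
equalizer, so by well-pointedness every `Y ⟶ 1` is mono, hence iso, and `1` is initial), and its
pullback along `X ⟶ 1` misses `p`. As `Cg ⊣ Vs`, `Vs` is an isomorphism onto its closed sets iff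
it reflects order, i.e. iff every subobject is the join of the atoms below it.
-/

theorem _root_.GaloisConnection.exists_orderIso_fixedPoints_iff {α β : Type*} [PartialOrder α]
    [PartialOrder β] {l : α → β} {u : β → α} (gc : GaloisConnection l u) :
    (∃ e : β ≃o {a // u (l a) = a}, ∀ b, (e b : α) = u b) ↔ ∀ b b', u b ≤ u b' → b ≤ b' := by
  constructor
  · rintro ⟨e, he⟩ b b' h
    rwa [← e.le_iff_le, ← Subtype.coe_le_coe, he, he]
  · intro hu
    have l_u_eq : ∀ b, l (u b) = b := fun b =>
      le_antisymm (gc.l_u_le b) (hu _ _ (gc.u_l_u_eq_u b).ge)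
    exact ⟨{ toFun := fun b => ⟨u b, gc.u_l_u_eq_u b⟩
             invFun := fun a => l a.1
             left_inv := l_u_eq
             right_inv := fun a => Subtype.ext a.2
             map_rel_iff' := ⟨hu _ _, fun h => gc.monotone_u h⟩ }, fun _ => rfl⟩

theorem _root_.CategoryTheory.Subobject.mk_le_iff_factors {X A : C} (S : Subobject X)
    (f : A ⟶ X) [Mono f] : Subobject.mk f ≤ S ↔ S.Factors f :=
  ⟨fun h => Subobject.factors_of_le f h (Subobject.mk_factors_self f),
    fun h => Subobject.mk_le_of_comm (S.factorThru f h) (S.factorThru_arrow f h)⟩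

section Atoms

variable [HasFiniteLimits C]

theorem nontrivial_subobject_terminal (hnt : NonTrivialCat C) (hwp : WellPointed C) :
    Nontrivial (Subobject (⊤_ C)) := by
  by_contra h
  rw [not_nontrivial_iff_subsingleton] at h
  have isIso_of_mono : ∀ {U : C} (m : U ⟶ ⊤_ C) [Mono m], IsIso m := fun m _ =>
    (Subobject.isIso_iff_mk_eq_top m).2 (Subsingleton.elim _ _)
  have point_unique : ∀ {Z : C} (p q : ⊤_ C ⟶ Z), p = q := fun p q => by
    have := isIso_of_mono (equalizer.ι p q)
    rw [← cancel_epi (equalizer.ι p q), equalizer.condition]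
  have isIso_from : ∀ Y : C, IsIso (terminal.from Y) := fun Y =>
    have : Mono (terminal.from Y) := ⟨fun f g _ => hwp f g fun _ => point_unique _ _⟩
    isIso_of_mono _
  exact hnt _ (IsInitial.ofUniqueHom (fun Y => inv (terminal.from Y))
    fun _ _ => point_unique _ _) terminalIsTerminal

theorem not_isBotIn_mk_point (hnt : NonTrivialCat C) (hwp : WellPointed C) {X : C}
    (p : ⊤_ C ⟶ X) : ¬ IsBotIn (Subobject.mk p) := by
  have := nontrivial_subobject_terminal hnt hwp
  obtain ⟨T, hT⟩ := exists_ne (⊤ : Subobject (⊤_ C))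
  intro hbot
  have hp : ((Subobject.pullback (terminal.from X)).obj T).Factors p :=
    (Subobject.mk_le_iff_factors _ p).1 (hbot _)
  rw [pullback_factors_iff, Subsingleton.elim (p ≫ terminal.from X) (𝟙 _),
    ← Subobject.mk_le_iff_factors, ← Subobject.top_eq_id] at hp
  exact hT (top_le_iff.1 hp)

theorem exists_point_factors_of_not_isBotIn (hpt : EnoughPoints C) {X : C} {S : Subobject X}
    (hS : ¬ IsBotIn S) : ∃ p : ⊤_ C ⟶ X, S.Factors p := by
  have hS' : NonInitial (S : C) := fun hi =>
    hS fun _ => Subobject.le_of_comm (hi.to _) (hi.hom_ext _ _)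
  exact ⟨(hpt _ hS').some.section_ ≫ S.arrow, Subobject.factors_comp_arrow _⟩

theorem eq_of_mk_point_factors {X : C} {p q : ⊤_ C ⟶ X} (h : (Subobject.mk p).Factors q) :
    q = p := by
  obtain ⟨g, rfl⟩ := h
  exact (congrArg (· ≫ p) (terminal.hom_ext g (𝟙 _))).trans (Category.id_comp p)

theorem isAtomIn_mk_point (hnt : NonTrivialCat C) (hwp : WellPointed C) (hpt : EnoughPoints C)
    {X : C} (p : ⊤_ C ⟶ X) : IsAtomIn (Subobject.mk p) := by
  refine ⟨not_isBotIn_mk_point hnt hwp p, fun T hT => by_contra fun hTbot => ?_⟩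
  obtain ⟨q, hq⟩ := exists_point_factors_of_not_isBotIn hpt hTbot
  obtain rfl := eq_of_mk_point_factors (Subobject.factors_of_le q hT.le hq)
  exact hT.not_ge ((Subobject.mk_le_iff_factors T q).2 hq)

theorem IsAtomIn.exists_eq_mk_point (hnt : NonTrivialCat C) (hwp : WellPointed C)
    (hpt : EnoughPoints C) {X : C} {A : Subobject X} (hA : IsAtomIn A) :
    ∃ p : ⊤_ C ⟶ X, A = Subobject.mk p := by
  obtain ⟨p, hp⟩ := exists_point_factors_of_not_isBotIn hpt hA.1
  exact ⟨p, (((Subobject.mk_le_iff_factors A p).2 hp).eq_of_not_lt fun h =>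
    not_isBotIn_mk_point hnt hwp p (hA.2 _ h)).symm⟩

theorem isGLB_cg {X : C} (hX : MonoCompleteAt X) (T : Set (⊤_ C ⟶ X)) :
    IsGLB {S : Subobject X | ∀ p ∈ T, S.Factors p} (Cg T) := by
  rw [Cg, dif_pos (hX _)]
  exact (hX _).choose_spec

theorem gc_cg_vs {X : C} (hX : MonoCompleteAt X) : GaloisConnection (Cg (X := X)) Vs := by
  refine fun T S => ⟨fun h p hp => Subobject.factors_of_le p h ?_, fun h => (isGLB_cg hX T).1 h⟩
  exact (Subobject.mk_le_iff_factors _ p).1 <|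
    (isGLB_cg hX T).2 fun S' hS' => (Subobject.mk_le_iff_factors S' p).2 (hS' p hp)

theorem AtomicSubobjects.le_of_vs_subset (hnt : NonTrivialCat C) (hwp : WellPointed C)
    (hpt : EnoughPoints C) {X : C} (hat : AtomicSubobjects X) {S S' : Subobject X}
    (h : Vs S ⊆ Vs S') : S ≤ S' := by
  refine (hat S).2 fun A ⟨hA, hAS⟩ => ?_
  obtain ⟨p, rfl⟩ := hA.exists_eq_mk_point hnt hwp hpt
  exact (Subobject.mk_le_iff_factors _ p).2 (h ((Subobject.mk_le_iff_factors _ p).1 hAS))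

theorem atomicSubobjects_of_vs_subset (hnt : NonTrivialCat C) (hwp : WellPointed C)
    (hpt : EnoughPoints C) {X : C} (h : ∀ S S' : Subobject X, Vs S ⊆ Vs S' → S ≤ S') :
    AtomicSubobjects X := by
  refine fun S => ⟨fun A hA => hA.2, fun U hU => h S U fun p hp => ?_⟩
  have hpS := (Subobject.mk_le_iff_factors S p).2 hp
  exact (Subobject.mk_le_iff_factors U p).1 (hU ⟨isAtomIn_mk_point hnt hwp hpt p, hpS⟩)

end Atoms

theorem vs_orderIso_iff_atomic_general
    [HasFiniteLimits C]
    (hnt : NonTrivialCat C) (hwp : WellPointed C) (hpt : EnoughPoints C)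
    (X : C) (hX : MonoCompleteAt X) :
    (∃ e : Subobject X ≃o {T : Set (⊤_ C ⟶ X) // cl T = T},
        ∀ S : Subobject X, (e S : Set (⊤_ C ⟶ X)) = Vs S) ↔
      AtomicSubobjects X :=
  (gc_cg_vs hX).exists_orderIso_fixedPoints_iff.trans
    ⟨atomicSubobjects_of_vs_subset hnt hwp hpt, fun hat _ _ => hat.le_of_vs_subset hnt hwp hpt⟩

/-- `Vs : Sub(X) → K(Spec X)` is a lattice isomorphism onto the lattice of closed sets
of `Spec X` (the fixed points of `cl`) iff `Sub(X)` is atomic. -/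
theorem vs_orderIso_iff_atomic
    [WellPowered.{v} C] [HasFiniteLimits C] [HasImages C] [StableImages C] [CoherentJoins C]
    (hnt : NonTrivialCat C) (hwp : WellPointed C) (hpt : EnoughPoints C)
    (X : C) (hX : MonoCompleteAt X) :
    (∃ e : Subobject X ≃o {T : Set (⊤_ C ⟶ X) // cl T = T},
        ∀ S : Subobject X, (e S : Set (⊤_ C ⟶ X)) = Vs S) ↔
      AtomicSubobjects X :=
  vs_orderIso_iff_atomic_general hnt hwp hpt X hX

end Paper
end

section
/- Let 𝒳 be a non-trivial positive and coherent category which is well-pointed and filtral, and assume Sub(X) is an atomic lattice for every object X of 𝒳. Then the functor Spec : 𝒳 → KH restricts to an equivalence between the full subcategory of 𝒳 on the decidable objects and the category of finite sets and functions. -/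
open CategoryTheory CategoryTheory.Limits Opposite

universe w' w v u

namespace Paper

variable {C : Type u} [Category.{v} C]

/-! The atoms of `Sub(X)` are the points of `X`, so atomicity makes a subobject determined by its
points and a morphism bijective on points an isomorphism; coherence makes binary coproducts
computed on points. Hence an object with finitely many points is a finite copower of `1`, it is
decidable (its off-diagonal points complement the diagonal), and its morphisms to any `Y` are
exactly the functions on points. Conversely a decidable object has finitely many points: a
filtral cover is compact, and the pulled-back complements of the points have the finite
intersection property but no common point. -/

instance [HasFiniteLimits C] [BinaryCoproductsDisjoint C] : InitialMonoClass C :=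
  initialMonoClass_of_coproductsDisjoint

section Points

variable [HasTerminal C]

lemma isEmpty_point_of_isInitial (hnt : NonTrivialCat C) {Z : C} (hZ : IsInitial Z) :
    IsEmpty (⊤_ C ⟶ Z) :=
  ⟨fun p => hnt (⊤_ C) (hZ.ofIso ⟨terminal.from Z, p, hZ.hom_ext _ _, terminal.hom_ext _ _⟩)
    terminalIsTerminal⟩

variable [HasBinaryCoproducts C] [BinaryCoproductsDisjoint C]

/-- Without points, the two injections `A ⟶ A ⨿ A` agree, so `A` is their pullback and hence
initial. -/
noncomputable def isInitialOfIsEmptyPoint (hwp : WellPointed C) (A : C)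
    [IsEmpty (⊤_ C ⟶ A)] : IsInitial A := by
  have hinl : (coprod.inl : A ⟶ A ⨿ A) = coprod.inr := hwp _ _ fun p => isEmptyElim p
  refine IsInitial.ofBinaryCoproductDisjointOfIsLimit
    (PullbackCone.mk (𝟙 A) (𝟙 A) (by rw [hinl])) ?_
  refine PullbackCone.IsLimit.mk _ (fun s => s.fst) (fun s => Category.comp_id _)
    (fun s => ?_) (fun s m h₁ _ => by simpa using h₁)
  exact (cancel_mono coprod.inl).mp (by simpa [← hinl] using s.condition)

lemma isEmpty_point_iff (hnt : NonTrivialCat C) (hwp : WellPointed C) (A : C) :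
    IsEmpty (⊤_ C ⟶ A) ↔ Nonempty (IsInitial A) :=
  ⟨fun _ => ⟨isInitialOfIsEmptyPoint hwp A⟩, fun ⟨hA⟩ => isEmpty_point_of_isInitial hnt hA⟩

end Points

section Subobjects

lemma vs_top [HasTerminal C] (X : C) : Vs (⊤ : Subobject X) = Set.univ :=
  Set.eq_univ_of_forall fun p => Subobject.top_factors p

lemma vs_monotone [HasTerminal C] (X : C) : Monotone (Vs : Subobject X → Set (⊤_ C ⟶ X)) :=
  fun _ _ h p hp => Subobject.factors_of_le p h hp

lemma vs_inf [HasTerminal C] [HasPullbacks C] {X : C} (S T : Subobject X) :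
    Vs (S ⊓ T) = Vs S ∩ Vs T :=
  Set.ext fun p => Subobject.inf_factors p

lemma Subobject.mk_le_of_factors {A X : C} {f : A ⟶ X} [Mono f] {S : Subobject X}
    (h : S.Factors f) : Subobject.mk f ≤ S :=
  Subobject.mk_le_of_comm _ (S.factorThru_arrow f h)

lemma Subobject.eq_top_of_factors_id {X : C} {S : Subobject X} (h : S.Factors (𝟙 X)) :
    S = ⊤ :=
  top_le_iff.mp <| Subobject.le_of_factors <| by
    simpa using Subobject.factors_of_factors_right (⊤ : Subobject X).arrow h

lemma pullback_obj_sup [HasPullbacks C] [HasImages C] [HasBinaryCoproducts C] [CoherentJoins C]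
    {X Y : C} (f : X ⟶ Y) (S T : Subobject Y) :
    (Subobject.pullback f).obj (S ⊔ T) =
      (Subobject.pullback f).obj S ⊔ (Subobject.pullback f).obj T :=
  (CoherentJoins.pullback_sup f S T _ isLUB_pair).unique isLUB_pair

variable [HasFiniteLimits C] [HasFiniteCoproducts C] [BinaryCoproductsDisjoint C]

lemma Subobject.eq_bot_of_isInitial {X : C} {S : Subobject X} (hS : IsInitial (S : C)) :
    S = ⊥ :=
  le_bot_iff.mp <| by
    rw [Subobject.bot_eq_initial_to]
    simpa only [Subobject.mk_arrow] using
      Subobject.mk_le_mk_of_comm (f₁ := S.arrow) (hS.to (⊥_ C)) (hS.hom_ext _ _)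

lemma isBotIn_iff {X : C} (S : Subobject X) : IsBotIn S ↔ S = ⊥ :=
  ⟨fun h => le_bot_iff.mp (h ⊥), fun h _ => h ▸ bot_le⟩

lemma vs_eq_empty_iff (hnt : NonTrivialCat C) (hwp : WellPointed C) {X : C}
    (S : Subobject X) : Vs S = ∅ ↔ S = ⊥ := by
  constructor
  · intro h
    have : IsEmpty (⊤_ C ⟶ (S : C)) :=
      ⟨fun u => (Set.eq_empty_iff_forall_notMem.mp h) _ (Subobject.factors_comp_arrow u)⟩
    exact Subobject.eq_bot_of_isInitial (isInitialOfIsEmptyPoint hwp _)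
  · rintro rfl
    refine Set.eq_empty_of_forall_notMem fun p hp => ?_
    exact (isEmpty_point_of_isInitial hnt initialIsInitial).false
      ((⊥ : Subobject X).factorThru p hp ≫ Subobject.botCoeIsoInitial.hom)

lemma vs_nonempty_iff (hnt : NonTrivialCat C) (hwp : WellPointed C) {X : C}
    (S : Subobject X) : (Vs S).Nonempty ↔ S ≠ ⊥ := by
  rw [Set.nonempty_iff_ne_empty, Ne, vs_eq_empty_iff hnt hwp]

/-- The atoms of `Sub(X)` are the subobjects given by points. -/
lemma vs_subset_vs_iff (hnt : NonTrivialCat C) (hwp : WellPointed C) {X : C}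
    (hX : AtomicSubobjects X) {S T : Subobject X} : Vs S ⊆ Vs T ↔ S ≤ T := by
  refine ⟨fun h => (hX S).2 fun A ⟨hA, hAS⟩ => ?_, fun h => vs_monotone X h⟩
  obtain ⟨p, hp⟩ := (vs_nonempty_iff hnt hwp A).mpr (mt (isBotIn_iff A).mpr hA.1)
  have hpA : Subobject.mk p = A := by
    refine (Subobject.mk_le_of_factors hp).eq_of_not_lt fun hlt => ?_
    have hbot := (isBotIn_iff _).mp (hA.2 _ hlt)
    exact Set.notMem_empty p (((vs_eq_empty_iff hnt hwp _).mpr hbot).subset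
      (Subobject.mk_factors_self p))
  exact hpA ▸ Subobject.mk_le_of_factors (h (vs_monotone X hAS hp))

lemma vs_injective (hnt : NonTrivialCat C) (hwp : WellPointed C) {X : C}
    (hX : AtomicSubobjects X) : Function.Injective (Vs : Subobject X → Set (⊤_ C ⟶ X)) :=
  fun _ _ h => le_antisymm ((vs_subset_vs_iff hnt hwp hX).mp h.le)
    ((vs_subset_vs_iff hnt hwp hX).mp h.ge)

lemma factors_iff_pullback_ne_bot (hnt : NonTrivialCat C) (hwp : WellPointed C) {X : C}
    (p : ⊤_ C ⟶ X) (S : Subobject X) : S.Factors p ↔ (Subobject.pullback p).obj S ≠ ⊥ := by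
  rw [← vs_nonempty_iff hnt hwp]
  constructor
  · exact fun h => ⟨𝟙 _, (pullback_factors_iff p S _).mpr (by rwa [Category.id_comp])⟩
  · rintro ⟨q, hq⟩
    rw [Vs, Set.mem_ofPred_eq, pullback_factors_iff, terminal.hom_ext q (𝟙 _),
      Category.id_comp] at hq
    exact hq

variable [HasImages C] [CoherentJoins C]

lemma vs_sup (hnt : NonTrivialCat C) (hwp : WellPointed C) {X : C} (S T : Subobject X) :
    Vs (S ⊔ T) = Vs S ∪ Vs T := by
  ext p
  simp only [Vs, Set.mem_union, Set.mem_ofPred_eq, factors_iff_pullback_ne_bot hnt hwp p,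
    pullback_obj_sup, Ne, sup_eq_bot_iff, not_and_or]

lemma inf_sup_le_of_atomic (hnt : NonTrivialCat C) (hwp : WellPointed C) {X : C}
    (hX : AtomicSubobjects X) (a b c : Subobject X) : a ⊓ (b ⊔ c) ≤ a ⊓ b ⊔ a ⊓ c :=
  (vs_subset_vs_iff hnt hwp hX).mp <| by
    rw [vs_inf, vs_sup hnt hwp, vs_sup hnt hwp, vs_inf, vs_inf, Set.inter_union_distrib_left]

end Subobjects

section Coproducts

lemma mono_of_injective_comp [HasTerminal C] (hwp : WellPointed C) {A B : C} (k : A ⟶ B)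
    (hk : Function.Injective fun p : ⊤_ C ⟶ A => p ≫ k) : Mono k :=
  ⟨fun f g h => hwp f g fun p => hk (by simp only [Category.assoc, h])⟩

lemma mk_inl_sup_mk_inr [HasBinaryCoproducts C] [BinaryCoproductsDisjoint C] [HasImages C]
    (A B : C) :
    Subobject.mk (coprod.inl : A ⟶ A ⨿ B) ⊔ Subobject.mk coprod.inr = ⊤ := by
  set U := Subobject.mk (coprod.inl : A ⟶ A ⨿ B) ⊔ Subobject.mk coprod.inr
  have hl : U.Factors coprod.inl := Subobject.factors_of_le _ le_sup_left
    (Subobject.mk_factors_self _)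
  have hr : U.Factors coprod.inr := Subobject.factors_of_le _ le_sup_right
    (Subobject.mk_factors_self _)
  exact Subobject.eq_top_of_factors_id <| (Subobject.factors_iff _ _).mpr
    ⟨coprod.desc (U.factorThru _ hl) (U.factorThru _ hr), by ext <;> simp⟩

variable [HasFiniteLimits C] [HasFiniteCoproducts C] [BinaryCoproductsDisjoint C]

lemma isIso_of_bijective_comp (hnt : NonTrivialCat C) (hwp : WellPointed C) {A B : C}
    (hB : AtomicSubobjects B) (k : A ⟶ B)
    (hk : Function.Bijective fun p : ⊤_ C ⟶ A => p ≫ k) : IsIso k := by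
  have := mono_of_injective_comp hwp k hk.1
  rw [Subobject.isIso_iff_mk_eq_top]
  refine vs_injective hnt hwp hB ((vs_top B).symm ▸ Set.eq_univ_of_forall fun z => ?_)
  obtain ⟨p, rfl⟩ := hk.2 z
  exact Subobject.factors_of_factors_right p (Subobject.mk_factors_self k)

lemma comp_inl_ne_comp_inr (hnt : NonTrivialCat C) {A B : C} (a : ⊤_ C ⟶ A)
    (b : ⊤_ C ⟶ B) : a ≫ coprod.inl ≠ b ≫ coprod.inr := fun h =>
  (isEmpty_point_of_isInitial hnt IsInitial.ofBinaryCoproductDisjoint).false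
    (pullback.lift a b h)

variable [HasImages C] [CoherentJoins C]

lemma bijective_points_coprod (hnt : NonTrivialCat C) (hwp : WellPointed C) (A B : C) :
    Function.Bijective (Sum.elim (fun a : ⊤_ C ⟶ A => a ≫ coprod.inl)
      (fun b : ⊤_ C ⟶ B => b ≫ coprod.inr)) := by
  refine ⟨Function.Injective.sumElim (fun _ _ h => (cancel_mono _).mp h)
    (fun _ _ h => (cancel_mono _).mp h) (comp_inl_ne_comp_inr hnt), fun z => ?_⟩
  have hz : z ∈ Vs (Subobject.mk (coprod.inl : A ⟶ A ⨿ B) ⊔ Subobject.mk coprod.inr) := by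
    rw [mk_inl_sup_mk_inr, vs_top]
    trivial
  rcases (vs_sup hnt hwp _ _ ▸ hz : _ ∨ _) with ⟨a, ha⟩ | ⟨b, hb⟩
  · exact ⟨Sum.inl a, ha⟩
  · exact ⟨Sum.inr b, hb⟩

lemma bijective_sumElim_iff_bijective_comp_desc (hnt : NonTrivialCat C) (hwp : WellPointed C)
    {A B Z : C} (m₁ : A ⟶ Z) (m₂ : B ⟶ Z) :
    Function.Bijective (Sum.elim (fun a : ⊤_ C ⟶ A => a ≫ m₁) (fun b => b ≫ m₂)) ↔
      Function.Bijective fun z : ⊤_ C ⟶ A ⨿ B => z ≫ coprod.desc m₁ m₂ := by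
  have hcomp : Sum.elim (fun a : ⊤_ C ⟶ A => a ≫ m₁) (fun b => b ≫ m₂) =
      (fun z => z ≫ coprod.desc m₁ m₂) ∘
        Sum.elim (fun a => a ≫ coprod.inl) (fun b => b ≫ coprod.inr) := by
    ext (a | b)
    · simp only [Function.comp_apply, Sum.elim_inl, Category.assoc]
      rw [coprod.inl_desc]
    · simp only [Function.comp_apply, Sum.elim_inr, Category.assoc]
      rw [coprod.inr_desc]
  rw [hcomp, Function.Bijective.of_comp_iff _ (bijective_points_coprod hnt hwp A B)]

lemma bijective_points_of_isColimit (hnt : NonTrivialCat C) (hwp : WellPointed C)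
    {A B Z : C} {m₁ : A ⟶ Z} {m₂ : B ⟶ Z} (hc : IsColimit (BinaryCofan.mk m₁ m₂)) :
    Function.Bijective (Sum.elim (fun a : ⊤_ C ⟶ A => a ≫ m₁) (fun b => b ≫ m₂)) := by
  have : IsIso (coprod.desc m₁ m₂) :=
    ((colimit.isColimit _).coconePointUniqueUpToIso hc).isIso_hom
  rw [bijective_sumElim_iff_bijective_comp_desc hnt hwp]
  exact ⟨fun _ _ h => (cancel_mono _).mp h, fun z => ⟨z ≫ inv (coprod.desc m₁ m₂), by simp⟩⟩

lemma isColimit_of_bijective_points (hnt : NonTrivialCat C) (hwp : WellPointed C)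
    {A B Z : C} (hZ : AtomicSubobjects Z) {m₁ : A ⟶ Z} {m₂ : B ⟶ Z}
    (h : Function.Bijective (Sum.elim (fun a : ⊤_ C ⟶ A => a ≫ m₁) (fun b => b ≫ m₂))) :
    Nonempty (IsColimit (BinaryCofan.mk m₁ m₂)) := by
  rw [bijective_sumElim_iff_bijective_comp_desc hnt hwp] at h
  have := isIso_of_bijective_comp hnt hwp hZ _ h
  exact ⟨IsColimit.ofPointIso (colimit.isColimit _) (i := this)⟩

end Coproducts

section Copowers

variable [HasTerminal C] [HasInitial C] [HasBinaryCoproducts C]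

noncomputable def copow : ℕ → C
  | 0 => ⊥_ C
  | n + 1 => (⊤_ C) ⨿ copow n

noncomputable def copowPt : (n : ℕ) → Fin n → (⊤_ C ⟶ copow (C := C) n)
  | 0 => Fin.elim0
  | n + 1 => Fin.cases coprod.inl fun j => copowPt n j ≫ coprod.inr

noncomputable def copowDesc {V : C} : (n : ℕ) → (Fin n → (⊤_ C ⟶ V)) → (copow n ⟶ V)
  | 0, _ => initial.to V
  | n + 1, v => coprod.desc (v 0) (copowDesc n (Fin.tail v))

@[simp]
lemma copowPt_desc {V : C} (n : ℕ) (v : Fin n → (⊤_ C ⟶ V)) (i : Fin n) :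
    copowPt n i ≫ copowDesc n v = v i := by
  induction n with
  | zero => exact i.elim0
  | succ n ih =>
    induction i using Fin.cases with
    | zero => exact coprod.inl_desc _ _
    | succ j =>
      calc copowPt (n + 1) j.succ ≫ copowDesc (n + 1) v
          = copowPt n j ≫ coprod.inr ≫ coprod.desc (v 0) (copowDesc n (Fin.tail v)) :=
            Category.assoc _ _ _
        _ = v j.succ := by rw [coprod.inr_desc, ih, Fin.tail]

end Copowers

section FinitelyManyPoints

lemma finite_points_prod [HasTerminal C] [HasBinaryProducts C] {X Y : C}
    [Finite (⊤_ C ⟶ X)] [Finite (⊤_ C ⟶ Y)] :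
    Finite (⊤_ C ⟶ X ⨯ Y) :=
  Finite.of_injective (fun z => (z ≫ prod.fst, z ≫ prod.snd)) fun _ _ h =>
    prod.hom_ext (congrArg Prod.fst h) (congrArg Prod.snd h)

variable [HasFiniteLimits C] [HasFiniteCoproducts C] [BinaryCoproductsDisjoint C]
  [HasImages C] [CoherentJoins C]

lemma copowPt_bijective (hnt : NonTrivialCat C) (hwp : WellPointed C) :
    ∀ n, Function.Bijective (copowPt (C := C) n)
  | 0 => ⟨fun i => i.elim0, fun z => (isEmpty_point_of_isInitial hnt initialIsInitial).elim z⟩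
  | n + 1 => by
    have ih := copowPt_bijective hnt hwp n
    have hcons : copowPt (C := C) (n + 1) =
        Sum.elim (fun a => a ≫ coprod.inl) (fun b => b ≫ coprod.inr) ∘
          Fin.cons (Sum.inl (𝟙 _)) (Sum.inr ∘ copowPt n) := by
      funext i
      induction i using Fin.cases with
      | zero => exact (Category.id_comp _).symm
      | succ j => rfl
    rw [hcons]
    refine (bijective_points_coprod hnt hwp _ _).comp
      ⟨Fin.cons_injective_iff.mpr ⟨by simp, Sum.inr_injective.comp ih.1⟩, ?_⟩
    rintro (a | b)
    · exact ⟨0, by rw [Fin.cons_zero, terminal.hom_ext a (𝟙 _)]⟩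
    · obtain ⟨j, rfl⟩ := ih.2 b
      exact ⟨j.succ, by simp⟩

lemma bijective_comp_copowDesc_iff (hnt : NonTrivialCat C) (hwp : WellPointed C) {V : C}
    (n : ℕ) (v : Fin n → (⊤_ C ⟶ V)) :
    Function.Bijective (fun p : ⊤_ C ⟶ copow n => p ≫ copowDesc n v) ↔ Function.Bijective v := by
  rw [← Function.Bijective.of_comp_iff _ (copowPt_bijective hnt hwp n)]
  exact iff_of_eq (congrArg _ (funext (copowPt_desc n v)))

lemma _root_.Function.Injective.bijective_sumElim_compl {α β : Type*} {f : α → β}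
    (hf : Function.Injective f) :
    Function.Bijective (Sum.elim f (Subtype.val : ↥(Set.range f)ᶜ → β)) := by
  refine ⟨hf.sumElim Subtype.val_injective fun a b h => b.2 ⟨a, h⟩, fun z => ?_⟩
  by_cases hz : z ∈ Set.range f
  · obtain ⟨a, rfl⟩ := hz
    exact ⟨Sum.inl a, rfl⟩
  · exact ⟨Sum.inr ⟨z, hz⟩, rfl⟩

/-- The off-diagonal points of `X ⨯ X`, realised as a finite copower of `1`, complement the
diagonal. -/
lemma decidableObj_of_finite_points (hnt : NonTrivialCat C) (hwp : WellPointed C) {X : C}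
    (hX : AtomicSubobjects (X ⨯ X)) [Finite (⊤_ C ⟶ X)] : DecidableObj X := by
  have : Finite (⊤_ C ⟶ X ⨯ X) := finite_points_prod
  let diagPt := fun a : ⊤_ C ⟶ X => a ≫ diag X
  obtain ⟨m, ⟨e⟩⟩ := Finite.exists_equiv_fin ↥(Set.range diagPt)ᶜ
  let offDiag := Subtype.val ∘ e.symm
  refine ⟨copow m, copowDesc m offDiag, isColimit_of_bijective_points hnt hwp hX ?_⟩
  rw [← Function.Bijective.of_comp_iff _ (Function.bijective_id.sumMap
    (copowPt_bijective hnt hwp m)), Sum.elim_comp_map]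
  have hdesc : (fun y => y ≫ copowDesc m offDiag) ∘ copowPt m = offDiag :=
    funext (copowPt_desc m offDiag)
  have hdiag : Function.Injective diagPt := fun _ _ h => (cancel_mono (diag X)).mp h
  have hsplit : Sum.elim (diagPt ∘ id) ((fun y => y ≫ copowDesc m offDiag) ∘ copowPt m) =
      Sum.elim diagPt Subtype.val ∘ Sum.map id e.symm := by
    rw [Sum.elim_comp_map, hdesc]
  rw [hsplit]
  exact hdiag.bijective_sumElim_compl.comp (Function.bijective_id.sumMap e.symm.bijective)

lemma exists_hom_comp_eq (hnt : NonTrivialCat C) (hwp : WellPointed C) {X Y : C}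
    (hX : AtomicSubobjects X) [Finite (⊤_ C ⟶ X)] (φ : (⊤_ C ⟶ X) → (⊤_ C ⟶ Y)) :
    ∃ f : X ⟶ Y, ∀ p, p ≫ f = φ p := by
  obtain ⟨n, ⟨e⟩⟩ := Finite.exists_equiv_fin (⊤_ C ⟶ X)
  have := isIso_of_bijective_comp hnt hwp hX _
    ((bijective_comp_copowDesc_iff hnt hwp n _).mpr e.symm.bijective)
  refine ⟨inv (copowDesc n e.symm) ≫ copowDesc n (φ ∘ e.symm), fun p => ?_⟩
  have hp : p ≫ inv (copowDesc n e.symm) = copowPt n (e p) := by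
    rw [IsIso.comp_inv_eq, copowPt_desc, Equiv.symm_apply_apply]
  rw [← Category.assoc, hp, copowPt_desc, Function.comp_apply, Equiv.symm_apply_apply]

end FinitelyManyPoints

section Filtral

namespace CenterFilter

variable {X : C}

def iUnion {ι : Type*} [Nonempty ι] (F : ι → CenterFilter X) (hF : Directed (· ≥ ·) F) :
    CenterFilter X where
  carrier := ⋃ i, (F i).carrier
  mem_complemented S hS := by
    obtain ⟨i, hi⟩ := Set.mem_iUnion.mp hS
    exact (F i).mem_complemented S hi
  nonempty :=
    (F (Classical.arbitrary ι)).nonempty.mono (Set.subset_iUnion (fun i => (F i).carrier) _)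
  inf_mem S hS T hT m hm := by
    obtain ⟨i, hi⟩ := Set.mem_iUnion.mp hS
    obtain ⟨j, hj⟩ := Set.mem_iUnion.mp hT
    obtain ⟨k, hik, hjk⟩ := hF i j
    exact Set.mem_iUnion.mpr ⟨k, (F k).inf_mem S (hik hi) T (hjk hj) m hm⟩
  mem_of_le S hS T hT hST := by
    obtain ⟨i, hi⟩ := Set.mem_iUnion.mp hS
    exact Set.mem_iUnion.mpr ⟨i, (F i).mem_of_le S hi T hT hST⟩

lemma iUnion_le {ι : Type*} [Nonempty ι] (F : ι → CenterFilter X) (hF : Directed (· ≥ ·) F)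
    (i : ι) : iUnion F hF ≤ F i :=
  Set.subset_iUnion (fun i => (F i).carrier) i

end CenterFilter

variable [HasFiniteLimits C] [HasFiniteCoproducts C] [BinaryCoproductsDisjoint C] [HasImages C]

lemma isComplementedSub_iff {X : C} (S : Subobject X) :
    IsComplementedSub S ↔ IsComplemented S := by
  constructor
  · rintro ⟨T, m, hglb, hbot, hlub⟩
    refine ⟨T, IsCompl.of_eq ?_ (isLUB_pair.unique hlub)⟩
    rw [← hglb.unique isGLB_pair]
    exact (isBotIn_iff m).mp hbot
  · rintro ⟨T, h⟩
    exact ⟨T, S ⊓ T, isGLB_pair, (isBotIn_iff _).mpr h.inf_eq_bot, h.sup_eq_top ▸ isLUB_pair⟩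

lemma isComplementedSub_inf {X : C} (hdist : ∀ a b c : Subobject X, a ⊓ (b ⊔ c) ≤ a ⊓ b ⊔ a ⊓ c)
    {S T : Subobject X} (hS : IsComplementedSub S) (hT : IsComplementedSub T) :
    IsComplementedSub (S ⊓ T) := by
  let := DistribLattice.ofInfSupLe hdist
  rw [isComplementedSub_iff] at hS hT ⊢
  exact hS.inf hT

def CenterFilter.center {X : C} (hdist : ∀ a b c : Subobject X, a ⊓ (b ⊔ c) ≤ a ⊓ b ⊔ a ⊓ c) :
    CenterFilter X where
  carrier := {S | IsComplementedSub S}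
  mem_complemented _ h := h
  nonempty := ⟨⊤, (isComplementedSub_iff ⊤).mpr isComplemented_top⟩
  inf_mem _ hS _ hT _ hm := hm.unique isGLB_pair ▸ isComplementedSub_inf hdist hS hT
  mem_of_le _ _ _ hT _ := hT

/-- The meet `G` of the filters corresponding to the finite meets of `S` corresponds to a lower
bound of `S`. If that bound were `⊥`, `G` would contain `⊥`, which already lies in one of the
filters of the directed family; but a filter containing `⊥` is the least one. -/
lemma FiltralObject.exists_ne_bot_forall_le {X : C} (hX : FiltralObject X)
    (hdist : ∀ a b c : Subobject X, a ⊓ (b ⊔ c) ≤ a ⊓ b ⊔ a ⊓ c) {ι : Type*}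
    (S : ι → Subobject X) (hS : ∀ J : Finset ι, J.inf S ≠ ⊥) : ∃ m ≠ ⊥, ∀ i, m ≤ S i := by
  classical
  obtain ⟨φ⟩ := hX
  let F : Finset ι → CenterFilter X := fun J => φ (J.inf S)
  have hF : Directed (· ≥ ·) F := fun J K =>
    ⟨J ∪ K, φ.monotone (Finset.inf_mono Finset.subset_union_left),
      φ.monotone (Finset.inf_mono Finset.subset_union_right)⟩
  let G := CenterFilter.iUnion F hF
  refine ⟨φ.symm G, fun hbot => ?_, fun i => ?_⟩
  · have hG : (⊥ : Subobject X) ∈ G.carrier := by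
      have hleast : φ ⊥ ≤ CenterFilter.center hdist := by
        simpa using φ.monotone (bot_le (a := φ.symm (CenterFilter.center hdist)))
      rw [← φ.apply_symm_apply G, hbot]
      exact hleast ((isComplementedSub_iff ⊥).mpr isComplemented_bot)
    obtain ⟨J, hJ⟩ := Set.mem_iUnion.mp hG
    refine hS J (le_bot_iff.mp (φ.le_iff_le.mp fun T hT => ?_))
    exact (F J).mem_of_le ⊥ hJ T ((φ ⊥).mem_complemented T hT) bot_le
  · rw [φ.symm_apply_le]
    simpa [F] using CenterFilter.iUnion_le F hF {i}

end Filtral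

section DecidableObjects

variable [HasFiniteLimits C] [HasFiniteCoproducts C] [BinaryCoproductsDisjoint C] [HasImages C]

lemma exists_comp_eq_of_strongEpi [StableImages C] (hnt : NonTrivialCat C) (hwp : WellPointed C)
    {X' X : C} (e : X' ⟶ X) [StrongEpi e] (p : ⊤_ C ⟶ X) : ∃ p', p' ≫ e = p := by
  have : StrongEpi (factorThruImage e ≫ image.ι e) := by rwa [image.fac]
  have : StrongEpi (image.ι e) := strongEpi_of_strongEpi (factorThruImage e) _
  have : IsIso (image.ι e) := isIso_of_mono_of_strongEpi _
  have htop : imageSubobject (pullback.snd e p) = ⊤ := by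
    rw [← StableImages.image_pullback, imageSubobject, Subobject.mk_eq_top_of_isIso,
      Subobject.pullback_top]
  have : Nonempty (⊤_ C ⟶ pullback e p) := by
    rw [← not_isEmpty_iff, isEmpty_point_iff hnt hwp]
    rintro ⟨hP⟩
    have hle : imageSubobject (pullback.snd e p) ≤ ⊥ := by
      rw [Subobject.bot_eq_initial_to]
      exact imageSubobject_le_mk _ _ (hP.to (⊥_ C)) (terminal.hom_ext _ _)
    rw [htop, le_bot_iff, ← vs_eq_empty_iff hnt hwp, vs_top] at hle
    exact Set.univ_nonempty.ne_empty hle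
  obtain ⟨q⟩ := this
  refine ⟨q ≫ pullback.fst e p, ?_⟩
  rw [Category.assoc, pullback.condition, ← Category.assoc,
    terminal.hom_ext (q ≫ pullback.snd e p) (𝟙 _), Category.id_comp]

variable [CoherentJoins C]

lemma exists_comp_eq_lift_iff (hnt : NonTrivialCat C) (hwp : WellPointed C) {X Y : C}
    {g : Y ⟶ X ⨯ X} (hc : IsColimit (BinaryCofan.mk (diag X) g)) (a b : ⊤_ C ⟶ X) :
    (∃ y, y ≫ g = prod.lift a b) ↔ a ≠ b := by
  have hbij := bijective_points_of_isColimit hnt hwp hc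
  constructor
  · rintro ⟨y, hy⟩ rfl
    exact Sum.inl_ne_inr (hbij.1 ((prod.comp_diag a).trans hy.symm : _ = _))
  · intro hab
    obtain ⟨a' | y, h⟩ := hbij.2 (prod.lift a b)
    · have h' : prod.lift a' a' = prod.lift a b := (prod.comp_diag a').symm.trans h
      have ha := congrArg (· ≫ prod.fst) h'
      have hb := congrArg (· ≫ prod.snd) h'
      simp only [prod.lift_fst, prod.lift_snd] at ha hb
      exact absurd (ha.symm.trans hb) hab
    · exact ⟨y, h⟩

/-- If `X` had infinitely many points, the subobjects "`e x ≠ p`" of a filtral cover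
`e : X' ⟶ X` would have the finite intersection property, and a point of a common lower
bound would be a point `x` with `e x ≠ e x`. -/
lemma finite_points_of_decidableObj [StableImages C] (hnt : NonTrivialCat C)
    (hwp : WellPointed C) (hf : Filtral C) (hat : ∀ X : C, AtomicSubobjects X) {X : C}
    (hX : DecidableObj X) : Finite (⊤_ C ⟶ X) := by
  obtain ⟨Y, g, ⟨hc⟩⟩ := hX
  have : Mono g := Mono.of_binaryCoproductDisjoint_right (diag X) hc
  obtain ⟨X', e, ⟨he⟩, hX'⟩ := hf X
  have : IsRegularEpi e := ⟨⟨he⟩⟩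
  by_contra hfin
  rw [not_finite_iff_infinite] at hfin
  let off : (⊤_ C ⟶ X) → Subobject X' := fun p =>
    (Subobject.pullback (prod.lift (terminal.from X' ≫ p) e)).obj (Subobject.mk g)
  have hoff : ∀ p x, (off p).Factors x ↔ p ≠ x ≫ e := fun p x => by
    have hx : x ≫ prod.lift (terminal.from X' ≫ p) e = prod.lift p (x ≫ e) := by
      rw [prod.comp_lift, ← Category.assoc, terminal.hom_ext (x ≫ _) (𝟙 _), Category.id_comp]
    rw [pullback_factors_iff, hx, Subobject.mk_factors_iff]
    exact exists_comp_eq_lift_iff hnt hwp hc p (x ≫ e)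
  obtain ⟨m, hm, hmoff⟩ := hX'.exists_ne_bot_forall_le (inf_sup_le_of_atomic hnt hwp (hat X'))
    off fun J => by
      obtain ⟨q, hq⟩ := Infinite.exists_notMem_finset J
      obtain ⟨x, rfl⟩ := exists_comp_eq_of_strongEpi hnt hwp e q
      rw [← vs_nonempty_iff hnt hwp]
      exact ⟨x, (Subobject.finset_inf_factors _).mpr fun p hp =>
        (hoff p x).mpr fun h => hq (h ▸ hp)⟩
  obtain ⟨x, hx⟩ := (vs_nonempty_iff hnt hwp m).mpr hm
  exact (hoff _ x).mp (Subobject.factors_of_le _ (hmoff (x ≫ e)) hx) rfl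

end DecidableObjects

section Equivalence

variable [HasFiniteLimits C] [HasFiniteCoproducts C] [BinaryCoproductsDisjoint C] [HasImages C]
  [StableImages C] [CoherentJoins C]

noncomputable def decidablePoints (hnt : NonTrivialCat C) (hwp : WellPointed C)
    (hf : Filtral C) (hat : ∀ X : C, AtomicSubobjects X) :
    ObjectProperty.FullSubcategory (fun X : C => DecidableObj X) ⥤ FintypeCat.{v} :=
  ObjectProperty.lift _ (ObjectProperty.ι _ ⋙ coyoneda.obj (op (⊤_ C))) fun X =>
    finite_points_of_decidableObj hnt hwp hf hat X.property

lemma decidablePoints_isEquivalence (hnt : NonTrivialCat C) (hwp : WellPointed C)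
    (hf : Filtral C) (hat : ∀ X : C, AtomicSubobjects X) :
    (decidablePoints hnt hwp hf hat).IsEquivalence where
  faithful := ⟨fun h => ObjectProperty.hom_ext _ (hwp _ _ (ConcreteCategory.congr_hom h))⟩
  full := ⟨fun {X Y} φ => by
    have := finite_points_of_decidableObj hnt hwp hf hat X.property
    obtain ⟨f, hfφ⟩ := exists_hom_comp_eq hnt hwp (hat X.obj) (ConcreteCategory.hom φ)
    exact ⟨ObjectProperty.homMk f, ConcreteCategory.hom_ext _ _ hfφ⟩⟩
  essSurj := ⟨fun T => by
    obtain ⟨n, ⟨e⟩⟩ := Finite.exists_equiv_fin T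
    let hpts := Equiv.ofBijective _ (copowPt_bijective (C := C) hnt hwp n)
    have : Finite (⊤_ C ⟶ copow (C := C) n) := Finite.of_equiv _ hpts
    exact ⟨⟨copow n, decidableObj_of_finite_points hnt hwp (hat _)⟩,
      ⟨FintypeCat.equivEquivIso (hpts.symm.trans e.symm)⟩⟩⟩

end Equivalence

theorem decidable_equiv_finiteSets_general
    [HasFiniteLimits C] [HasImages C] [StableImages C] [CoherentJoins C]
    [HasFiniteCoproducts C] [BinaryCoproductsDisjoint C]
    (hnt : NonTrivialCat C) (hwp : WellPointed C) (hf : Filtral C)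
    (hat : ∀ X : C, AtomicSubobjects X) :
    ∃ E : ObjectProperty.FullSubcategory (fun X : C => DecidableObj X) ≌ FintypeCat.{v},
      Nonempty ((E.functor ⋙ FintypeCat.incl) ≅
        ObjectProperty.ι _ ⋙ coyoneda.obj (op (⊤_ C))) := by
  have := decidablePoints_isEquivalence hnt hwp hf hat
  exact ⟨(decidablePoints hnt hwp hf hat).asEquivalence, ⟨ObjectProperty.liftCompιIso _ _ _⟩⟩

/-- `Spec` restricts to an equivalence between the decidable objects of `𝒳` and the
category of finite sets. -/
theorem decidable_equiv_finiteSets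
    [WellPowered.{v} C] [HasFiniteLimits C] [HasImages C] [StableImages C] [CoherentJoins C]
    [HasFiniteCoproducts C] [BinaryCoproductsDisjoint C]
    (hnt : NonTrivialCat C) (hwp : WellPointed C) (hf : Filtral C)
    (hat : ∀ X : C, AtomicSubobjects X) :
    ∃ E : ObjectProperty.FullSubcategory (fun X : C => DecidableObj X) ≌ FintypeCat.{v},
      Nonempty ((E.functor ⋙ FintypeCat.incl) ≅
        ObjectProperty.ι _ ⋙ coyoneda.obj (op (⊤_ C))) :=
  decidable_equiv_finiteSets_general hnt hwp hf hat

end Paper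
end
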